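/- Let a₁ = (1/2, √13/(2√3)) and a₂ = (1/2, −√13/(2√3)) in the Euclidean plane ℝ², let d = 1/(4√3), let L = ℤ·a₁ + ℤ·a₂, let m(w) = inf{‖w − v‖ : v ∈ L}, and let s(L) = inf{‖v‖ : v ∈ L, v ≠ 0}. Then σ := min{ m(a₁/2), m(a₂/2), 4d, √(m((a₁+a₂)/2)² + 4d²), s(L) } satisfies σ = 1/√3 and σ³ = (8/√39)·|det(a₁, a₂)|·d. -/

import Mathlib

/-!
Write `a₁ = (1/2, t)`, `a₂ = (1/2, -t)`, so that `p a₁ + q a₂ = ((p+q)/2, (p-q) t)`. Each squared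
distance entering `σ` is a sum of two squares of integers built from `p + q` and `p - q`, scaled by
`1/2` and `t`; as `p + q` and `p - q` have the same parity, those integers are odd or nonzero,
which bounds every term of `σ` from below in terms of `t`. For `t² = 13/12` each bound is at
least `1/√3 = 4d`.
-/

open Real

section Lattice

variable {E : Type*} [SeminormedAddCommGroup E] (a₁ a₂ : E)

noncomputable def latticeDist (w : E) : ℝ := sInf {r : ℝ | ∃ p q : ℤ, r = ‖w - (p • a₁ + q • a₂)‖}

noncomputable def latticeSystole : ℝ :=
  sInf {r : ℝ | ∃ p q : ℤ, p • a₁ + q • a₂ ≠ 0 ∧ r = ‖p • a₁ + q • a₂‖}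

variable {a₁ a₂}

theorem le_latticeDist {w : E} {c : ℝ} (h : ∀ p q : ℤ, c ≤ ‖w - (p • a₁ + q • a₂)‖) :
    c ≤ latticeDist a₁ a₂ w :=
  le_csInf ⟨_, 0, 0, rfl⟩ fun _ ⟨p, q, hr⟩ => hr ▸ h p q

theorem le_latticeSystole (ha₁ : a₁ ≠ 0) {c : ℝ}
    (h : ∀ p q : ℤ, p • a₁ + q • a₂ ≠ 0 → c ≤ ‖p • a₁ + q • a₂‖) :
    c ≤ latticeSystole a₁ a₂ :=
  le_csInf ⟨_, 1, 0, by simpa using ha₁, rfl⟩ fun _ ⟨p, q, hpq, hr⟩ => hr ▸ h p q hpq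

end Lattice

theorem Int.one_le_cast_sq {k : ℤ} (hk : k ≠ 0) : (1 : ℝ) ≤ (k : ℝ) ^ 2 :=
  mod_cast (one_le_sq_iff_one_le_abs _).mpr (Int.one_le_abs hk)

namespace RhombicLattice

variable {t : ℝ} {a₁ a₂ : EuclideanSpace ℝ (Fin 2)}

theorem norm_sub_sq (ha₁ : a₁ = ![1 / 2, t]) (ha₂ : a₂ = ![1 / 2, -t])
    (w : EuclideanSpace ℝ (Fin 2)) (p q : ℤ) :
    ‖w - (p • a₁ + q • a₂)‖ ^ 2 = (w 0 - (p + q) / 2) ^ 2 + (w 1 - (p - q) * t) ^ 2 := by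
  simp only [EuclideanSpace.real_norm_sq_eq, Fin.sum_univ_two, PiLp.sub_apply, PiLp.add_apply,
    PiLp.smul_apply, zsmul_eq_mul, ha₁, ha₂,
    Matrix.cons_val_zero, Matrix.cons_val_one, Matrix.cons_val_fin_one]
  ring

theorem sqrt_le_latticeDist_half_left (ha₁ : a₁ = ![1 / 2, t]) (ha₂ : a₂ = ![1 / 2, -t]) :
    √(1 / 16 + t ^ 2 / 4) ≤ latticeDist a₁ a₂ ((2 : ℝ)⁻¹ • a₁) := by
  refine le_latticeDist fun p q => (sq_le_sq₀ (sqrt_nonneg _) (norm_nonneg _)).mp ?_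
  have h₁ := Int.one_le_cast_sq (k := 1 - 2 * (p + q)) (by omega)
  have h₂ := Int.one_le_cast_sq (k := 1 - 2 * (p - q)) (by omega)
  push_cast at h₁ h₂
  rw [norm_sub_sq ha₁ ha₂, sq_sqrt (by positivity)]
  simp only [PiLp.smul_apply, smul_eq_mul, ha₁,
    Matrix.cons_val_zero, Matrix.cons_val_one, Matrix.cons_val_fin_one]
  nlinarith [sq_nonneg t]

theorem sqrt_le_latticeDist_half_right (ha₁ : a₁ = ![1 / 2, t]) (ha₂ : a₂ = ![1 / 2, -t]) :
    √(1 / 16 + t ^ 2 / 4) ≤ latticeDist a₁ a₂ ((2 : ℝ)⁻¹ • a₂) := by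
  refine le_latticeDist fun p q => (sq_le_sq₀ (sqrt_nonneg _) (norm_nonneg _)).mp ?_
  have h₁ := Int.one_le_cast_sq (k := 1 - 2 * (p + q)) (by omega)
  have h₂ := Int.one_le_cast_sq (k := 1 + 2 * (p - q)) (by omega)
  push_cast at h₁ h₂
  rw [norm_sub_sq ha₁ ha₂, sq_sqrt (by positivity)]
  simp only [PiLp.smul_apply, smul_eq_mul, ha₂,
    Matrix.cons_val_zero, Matrix.cons_val_one, Matrix.cons_val_fin_one]
  nlinarith [sq_nonneg t]

theorem min_le_latticeDist_half_add (ha₁ : a₁ = ![1 / 2, t]) (ha₂ : a₂ = ![1 / 2, -t]) :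
    min (1 / 2) |t| ≤ latticeDist a₁ a₂ ((2 : ℝ)⁻¹ • (a₁ + a₂)) := by
  refine le_latticeDist fun p q => (sq_le_sq₀ (by positivity) (norm_nonneg _)).mp ?_
  have hhalf : min (1 / 2) |t| ^ 2 ≤ 1 / 4 :=
    (pow_le_pow_left₀ (by positivity) (min_le_left _ _) 2).trans_eq (by norm_num)
  have ht : min (1 / 2) |t| ^ 2 ≤ t ^ 2 :=
    (pow_le_pow_left₀ (by positivity) (min_le_right _ _) 2).trans_eq (sq_abs t)
  rw [norm_sub_sq ha₁ ha₂]
  simp only [PiLp.smul_apply, PiLp.add_apply, smul_eq_mul, ha₁, ha₂,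
    Matrix.cons_val_zero, Matrix.cons_val_one, Matrix.cons_val_fin_one]
  rcases eq_or_ne p q with rfl | hpq
  · have := Int.one_le_cast_sq (k := 1 - 2 * p) (by omega)
    push_cast at this
    nlinarith
  · have := Int.one_le_cast_sq (sub_ne_zero.mpr hpq)
    push_cast at this
    nlinarith [sq_nonneg t, sq_nonneg ((p : ℝ) + q - 1)]

theorem min_le_latticeSystole (ha₁ : a₁ = ![1 / 2, t]) (ha₂ : a₂ = ![1 / 2, -t]) :
    min 1 |t| ≤ latticeSystole a₁ a₂ := by
  refine le_latticeSystole (fun h => by simpa [ha₁] using congr($h 0)) fun p q hpq => ?_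
  refine (sq_le_sq₀ (by positivity) (norm_nonneg _)).mp ?_
  have hone : min 1 |t| ^ 2 ≤ 1 :=
    (pow_le_pow_left₀ (by positivity) (min_le_left _ _) 2).trans_eq (one_pow 2)
  have ht : min 1 |t| ^ 2 ≤ t ^ 2 :=
    (pow_le_pow_left₀ (by positivity) (min_le_right _ _) 2).trans_eq (sq_abs t)
  rw [← norm_neg, ← zero_sub, norm_sub_sq ha₁ ha₂]
  simp only [PiLp.zero_apply, zero_sub, neg_sq]
  rcases eq_or_ne p q with rfl | hpq'
  · have hp : p ≠ 0 := by rintro rfl; simp at hpq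
    have := Int.one_le_cast_sq hp
    nlinarith
  · have := Int.one_le_cast_sq (sub_ne_zero.mpr hpq')
    push_cast at this
    nlinarith [sq_nonneg t, sq_nonneg ((p : ℝ) + q)]

theorem det_eq (ha₁ : a₁ = ![1 / 2, t]) (ha₂ : a₂ = ![1 / 2, -t]) :
    a₁ 0 * a₂ 1 - a₁ 1 * a₂ 0 = -t := by
  simp only [ha₁, ha₂, Matrix.cons_val_zero, Matrix.cons_val_one, Matrix.cons_val_fin_one]
  ring

theorem lower_bounds_of_sq_eq (ha₁ : a₁ = ![1 / 2, t]) (ha₂ : a₂ = ![1 / 2, -t])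
    (ht : t ^ 2 = 13 / 12) :
    1 / √3 ≤ latticeDist a₁ a₂ ((2 : ℝ)⁻¹ • a₁) ∧ 1 / √3 ≤ latticeDist a₁ a₂ ((2 : ℝ)⁻¹ • a₂) ∧
      1 / 2 ≤ latticeDist a₁ a₂ ((2 : ℝ)⁻¹ • (a₁ + a₂)) ∧ 1 / √3 ≤ latticeSystole a₁ a₂ := by
  have hcorner : √(1 / 16 + t ^ 2 / 4) = 1 / √3 := by rw [ht]; norm_num [sqrt_inv]
  have hhalf : (1 / 2 : ℝ) ≤ |t| :=
    (sq_le_sq₀ (by norm_num) (abs_nonneg t)).mp (by rw [sq_abs, ht]; norm_num)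
  have hu : (1 / √3) ^ 2 = 1 / 3 := by norm_num
  refine ⟨hcorner ▸ sqrt_le_latticeDist_half_left ha₁ ha₂,
    hcorner ▸ sqrt_le_latticeDist_half_right ha₁ ha₂,
    min_eq_left hhalf ▸ min_le_latticeDist_half_add ha₁ ha₂,
    le_trans (le_min ?_ ?_) (min_le_latticeSystole ha₁ ha₂)⟩
  · exact (sq_le_sq₀ (by positivity) zero_le_one).mp (by rw [hu]; norm_num)
  · exact (sq_le_sq₀ (by positivity) (abs_nonneg t)).mp (by rw [hu, sq_abs, ht]; norm_num)

end RhombicLattice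

/-- Equality case of the flat systolic estimate `sys³/vol ≤ 8/√39` for type `B₂`:
with `a₁ = (1/2, √13/(2√3))`, `a₂ = (1/2, −√13/(2√3))`, `d = 1/(4√3)`,
`L = ℤa₁ + ℤa₂`, `m(w) = dist(w, L)` and `s(L)` the shortest nonzero lattice
length, the quantity
`σ = min{m(a₁/2), m(a₂/2), 4d, √(m((a₁+a₂)/2)² + 4d²), s(L)}`
equals `1/√3` and satisfies `σ³ = (8/√39)·|det(a₁,a₂)|·d`. -/
theorem stmt19 (a₁ a₂ : EuclideanSpace ℝ (Fin 2)) (d : ℝ)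
    (ha₁ : a₁ = ![1 / 2, Real.sqrt 13 / (2 * Real.sqrt 3)])
    (ha₂ : a₂ = ![1 / 2, -(Real.sqrt 13 / (2 * Real.sqrt 3))])
    (hd : d = 1 / (4 * Real.sqrt 3))
    (m : EuclideanSpace ℝ (Fin 2) → ℝ)
    (hm : ∀ w, m w = sInf {r : ℝ | ∃ p q : ℤ, r = ‖w - (p • a₁ + q • a₂)‖})
    (s : ℝ)
    (hs : s = sInf {r : ℝ | ∃ p q : ℤ,
      p • a₁ + q • a₂ ≠ 0 ∧ r = ‖p • a₁ + q • a₂‖})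
    (σ : ℝ)
    (hσ : σ = min (m ((2:ℝ)⁻¹ • a₁))
      (min (m ((2:ℝ)⁻¹ • a₂))
        (min (4 * d)
          (min (Real.sqrt (m ((2:ℝ)⁻¹ • (a₁ + a₂)) ^ 2 + 4 * d ^ 2)) s)))) :
    σ = 1 / Real.sqrt 3 ∧
      σ ^ 3 = (8 / Real.sqrt 39) * |a₁ 0 * a₂ 1 - a₁ 1 * a₂ 0| * d := by
  set t := √13 / (2 * √3) with ht_def
  have ht : t ^ 2 = 13 / 12 := by rw [div_pow, mul_pow]; norm_num
  have hmL : m = latticeDist a₁ a₂ := funext hm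
  have hsL : s = latticeSystole a₁ a₂ := hs
  subst hmL hsL
  obtain ⟨hm₁, hm₂, hm₃, hsys⟩ := RhombicLattice.lower_bounds_of_sq_eq ha₁ ha₂ ht
  have h4d : 4 * d = 1 / √3 := by rw [hd]; field_simp
  have hd2 : 4 * d ^ 2 = 1 / 12 := by rw [hd]; field_simp; norm_num
  have hσ_eq : σ = 1 / √3 := by
    refine le_antisymm (hσ ▸ h4d ▸ min_le_of_right_le (min_le_of_right_le (min_le_left _ _))) ?_
    refine hσ ▸ le_min hm₁ (le_min hm₂ (le_min h4d.ge (le_min (le_sqrt_of_sq_le ?_) hsys)))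
    nlinarith [show (1 / √3) ^ 2 = 1 / 3 by norm_num]
  refine ⟨hσ_eq, ?_⟩
  rw [RhombicLattice.det_eq ha₁ ha₂, abs_neg, abs_of_pos (by positivity), hσ_eq, hd, ht_def,
    show (39 : ℝ) = 3 * 13 by norm_num, sqrt_mul (by norm_num)]
  field_simp
  norm_num
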